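/- Let F=(A,R) be an AF with symmetric attack relation and let F'=(A',R') be its shadow AF. For any S ⊆ A: S is naive in F' if and only if S_* = {s_* | s ∈ S} is naive in F'. -/
import Mathlib


/-- A set of arguments is conflict-free w.r.t. the attack relation `R`. -/
def ConflictFree {α : Type*} (R : α → α → Prop) (S : Finset α) : Prop :=
  ∀ x ∈ S, ∀ y ∈ S, ¬ R x y

/-- A set `S ⊆ A` is naive in the AF `(A, R)` if it is conflict-free and no proper
superset of it inside `A` is conflict-free. -/
def Naive {α : Type*} (A : Finset α) (R : α → α → Prop) (S : Finset α) : Prop :=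
  S ⊆ A ∧ ConflictFree R S ∧ ∀ S' ⊆ A, S ⊂ S' → ¬ ConflictFree R S'

/-- The attack relation of the shadow AF of `(A, R)`: original arguments are
`Sum.inl s`, shadow arguments `s_*` are `Sum.inr s`.  The original attacks are kept,
every argument attacks (and is attacked by) its own shadow, and whenever `(s,t) ∈ R`
we additionally have the attacks between `s` and `t_*`, between `s_*` and `t_*`,
and between `s_*` and `t`. -/
def shadowAttack {α : Type*} (R : α → α → Prop) : (α ⊕ α) → (α ⊕ α) → Prop
  | Sum.inl s, Sum.inl t => R s t
  | Sum.inl s, Sum.inr t => s = t ∨ R s t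
  | Sum.inr s, Sum.inl t => s = t ∨ R s t
  | Sum.inr s, Sum.inr t => R s t

/-- The set of arguments `A' = A ∪ {s_* | s ∈ A}` of the shadow AF of `(A, R)`. -/
def shadowArgs {α : Type*} [DecidableEq α] (A : Finset α) : Finset (α ⊕ α) :=
  A.image Sum.inl ∪ A.image Sum.inr

lemma naive_image_of_invol {β : Type*} [DecidableEq β] (A : Finset β) (R : β → β → Prop)
    (e : β → β) (he : ∀ x, e (e x) = x)
    (hA : A.image e = A) (hRe : ∀ x y, R x y → R (e x) (e y))
    (S : Finset β) (h : Naive A R S) : Naive A R (S.image e) := by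
  have hinj : Function.Injective e := Function.LeftInverse.injective he
  obtain ⟨hSA, hCF, hmax⟩ := h
  have himg : ∀ T : Finset β, T ⊆ A → T.image e ⊆ A := by
    intro T hT
    rw [← hA]; exact Finset.image_subset_image hT
  refine ⟨himg S hSA, ?_, ?_⟩
  · intro x hx y hy hxy
    simp only [Finset.mem_image] at hx hy
    obtain ⟨a, ha, rfl⟩ := hx
    obtain ⟨b, hb, rfl⟩ := hy
    exact hCF a ha b hb (by have := hRe _ _ hxy; rwa [he, he] at this)
  · intro S' hS' hsub hCF'
    refine hmax (S'.image e) (himg S' hS') ?_ ?_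
    · constructor
      · intro x hx
        refine Finset.mem_image.2 ⟨e x, hsub.1 (Finset.mem_image.2 ⟨x, hx, rfl⟩), he x⟩
      · intro hcon
        obtain ⟨z, hz, hznot⟩ := Finset.exists_of_ssubset hsub
        exact hznot (by
          have : e z ∈ S := hcon (Finset.mem_image.2 ⟨z, hz, rfl⟩)
          have := Finset.mem_image.2 ⟨e z, this, he z⟩
          exact this)
    · intro x hx y hy hxy
      simp only [Finset.mem_image] at hx hy
      obtain ⟨a, ha, rfl⟩ := hx
      obtain ⟨b, hb, rfl⟩ := hy
      exact hCF' a ha b hb (by have := hRe _ _ hxy; rwa [he, he] at this)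

/-- For an AF `(A, R)` with symmetric attack relation and its shadow AF:
a set `S ⊆ A` is naive in the shadow AF iff its shadow set
`S_* = {s_* | s ∈ S}` is naive in the shadow AF. -/
theorem stmt15 {α : Type*} [DecidableEq α] (A : Finset α) (R : α → α → Prop)
    (hR : ∀ x y, R x y → x ∈ A ∧ y ∈ A)
    (hSym : ∀ x y, R x y → R y x)
    (S : Finset α) (hS : S ⊆ A) :
    Naive (shadowArgs A) (shadowAttack R) (S.image Sum.inl) ↔
      Naive (shadowArgs A) (shadowAttack R) (S.image Sum.inr) := by
  have he : ∀ x : α ⊕ α, Sum.swap (Sum.swap x) = x := Sum.swap_swap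
  have hA : (shadowArgs A).image Sum.swap = shadowArgs A := by
    simp [shadowArgs, Finset.image_union, Finset.image_image, Function.comp]
    exact Finset.union_comm _ _
  have hRe : ∀ x y, shadowAttack R x y → shadowAttack R (Sum.swap x) (Sum.swap y) := by
    rintro (x|x) (y|y) h <;> simpa [shadowAttack, Sum.swap, Or.comm] using h
  have h1 : (S.image (Sum.inl : α → α ⊕ α)).image Sum.swap = S.image Sum.inr := by
    rw [Finset.image_image]; rfl
  have h2 : (S.image (Sum.inr : α → α ⊕ α)).image Sum.swap = S.image Sum.inl := by
    rw [Finset.image_image]; rfl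
  constructor
  · intro h
    have := naive_image_of_invol (shadowArgs A) (shadowAttack R) Sum.swap he hA hRe _ h
    rwa [h1] at this
  · intro h
    have := naive_image_of_invol (shadowArgs A) (shadowAttack R) Sum.swap he hA hRe _ h
    rwa [h2] at this
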